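/- Let X⋆ ∈ ℝ^{I₁×I₂×I₃} have tubal rank R with skinny t-SVD X⋆ = U⋆*Σ⋆*V⋆ᵀ and factors L⋆ := U⋆*Σ⋆^{1/2}, R⋆ := V⋆*Σ⋆^{1/2}. Let L♮ ∈ ℝ^{I₁×R×I₃} and R♮ ∈ ℝ^{I₂×R×I₃}, and set Δ_L := L♮ − L⋆, Δ_R := R♮ − R⋆. If ‖Δ_L*Σ⋆^{−1/2}‖_op ∨ ‖Δ_R*Σ⋆^{−1/2}‖_op < 1, then L♮ᵀ*L♮ and R♮ᵀ*R♮ are invertible for the t-product, and ‖L♮*(L♮ᵀ*L♮)⁻¹*Σ⋆^{1/2}‖_op ≤ 1/(1 − ‖Δ_L*Σ⋆^{−1/2}‖_op) and ‖R♮*(R♮ᵀ*R♮)⁻¹*Σ⋆^{1/2}‖_op ≤ 1/(1 − ‖Δ_R*Σ⋆^{−1/2}‖_op). -/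

import Mathlib

open scoped BigOperators
open Matrix

/-- An order-3 real tensor. -/
abbrev Tensor (I₁ I₂ I₃ : ℕ) := Fin I₁ → Fin I₂ → Fin I₃ → ℝ

namespace RTPCA

variable {I₁ I₂ I₃ J R : ℕ}

/-- The t-product, computed by circular convolution along the third mode
(equivalently, slice-wise products in the Fourier domain). -/
noncomputable def tprod (A : Tensor I₁ I₂ I₃) (B : Tensor I₂ J I₃) : Tensor I₁ J I₃ :=
  fun i j k => ∑ l : Fin I₂, ∑ t : Fin I₃, A i l t * B l j (k - t)

/-- The tensor transpose: transpose each frontal slice and reverse the order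
of the frontal slices 2 through I₃. -/
def tT (A : Tensor I₁ I₂ I₃) : Tensor I₂ I₁ I₃ :=
  fun j i k => A i j (-k)

/-- The identity tensor: first frontal slice is the identity, the rest are zero. -/
def idT (R I₃ : ℕ) : Tensor R R I₃ :=
  fun i j k => if i = j ∧ (k : ℕ) = 0 then 1 else 0

/-- Discrete Fourier transform along the third mode. -/
noncomputable def dft (A : Tensor I₁ I₂ I₃) (i : Fin I₁) (j : Fin I₂) (k : Fin I₃) : ℂ :=
  ∑ t : Fin I₃, (A i j t : ℂ) *
    Complex.exp (-(2 * Real.pi * Complex.I * (k.val : ℂ) * (t.val : ℂ)) / (I₃ : ℂ))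

/-- Fourier-domain frontal slice. -/
noncomputable def fSlice (A : Tensor I₁ I₂ I₃) (k : Fin I₃) : Matrix (Fin I₁) (Fin I₂) ℂ :=
  Matrix.of fun i j => dft A i j k

/-- Inverse DFT along the third mode (real part). -/
noncomputable def invDft (F : Fin I₁ → Fin I₂ → Fin I₃ → ℂ) : Tensor I₁ I₂ I₃ :=
  fun i j t =>
    ((∑ k : Fin I₃, F i j k *
      Complex.exp ((2 * Real.pi * Complex.I * (k.val : ℂ) * (t.val : ℂ)) / (I₃ : ℂ))) / (I₃ : ℂ)).re

/-- Squared Frobenius norm. -/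
noncomputable def fro2 (A : Tensor I₁ I₂ I₃) : ℝ := ∑ i, ∑ j, ∑ k, (A i j k) ^ 2

/-- Frobenius norm. -/
noncomputable def froNorm (A : Tensor I₁ I₂ I₃) : ℝ := Real.sqrt (fro2 A)

/-- Entrywise sup norm ‖A‖_∞. -/
noncomputable def infNorm (A : Tensor I₁ I₂ I₃) : ℝ := ⨆ i, ⨆ j, ⨆ k, |A i j k|

/-- ℓ_{2,∞} norm: largest ℓ₂ norm of a horizontal slice. -/
noncomputable def twoInfNorm (A : Tensor I₁ I₂ I₃) : ℝ :=
  ⨆ i, Real.sqrt (∑ j, ∑ k, (A i j k) ^ 2)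

/-- ℓ_{1,∞} norm: largest ℓ₁ norm of a horizontal slice. -/
noncomputable def oneInfNorm (A : Tensor I₁ I₂ I₃) : ℝ := ⨆ i, ∑ j, ∑ k, |A i j k|

/-- Spectral norm (largest singular value) of a complex matrix. -/
noncomputable def matSpecNorm {m n : ℕ} (M : Matrix (Fin m) (Fin n) ℂ) : ℝ :=
  ‖LinearMap.toContinuousLinearMap (Matrix.toEuclideanLin M)‖

/-- Tensor spectral norm = tensor operator norm: the largest singular value of
the Fourier-domain frontal slices. -/
noncomputable def specNorm (A : Tensor I₁ I₂ I₃) : ℝ :=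
  ⨆ k : Fin I₃, matSpecNorm (fSlice A k)

/-- f-diagonal in the Fourier domain with strictly positive diagonal entries. -/
def FDiagPos (S : Tensor R R I₃) : Prop :=
  (∀ k, ∀ i j : Fin R, i ≠ j → fSlice S k i j = 0) ∧
  (∀ k, ∀ i : Fin R, 0 < (fSlice S k i i).re ∧ (fSlice S k i i).im = 0)

/-- f-diagonal in the Fourier domain with nonnegative diagonal entries. -/
def FDiagNonneg (S : Tensor R R I₃) : Prop :=
  (∀ k, ∀ i j : Fin R, i ≠ j → fSlice S k i j = 0) ∧
  (∀ k, ∀ i : Fin R, 0 ≤ (fSlice S k i i).re ∧ (fSlice S k i i).im = 0)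

/-- Skinny t-SVD with tubal rank R (strictly positive Fourier-domain diagonal). -/
structure IsSkinnyTSVD (X : Tensor I₁ I₂ I₃) (U : Tensor I₁ R I₃)
    (S : Tensor R R I₃) (V : Tensor I₂ R I₃) : Prop where
  decomp : X = tprod (tprod U S) (tT V)
  orthU : tprod (tT U) U = idT R I₃
  orthV : tprod (tT V) V = idT R I₃
  diag : FDiagPos S

/-- Skinny t-SVD with tubal rank at most R (nonnegative diagonal allowed). -/
structure IsSkinnyTSVDLe (X : Tensor I₁ I₂ I₃) (U : Tensor I₁ R I₃)
    (S : Tensor R R I₃) (V : Tensor I₂ R I₃) : Prop where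
  decomp : X = tprod (tprod U S) (tT V)
  orthU : tprod (tT U) U = idT R I₃
  orthV : tprod (tT V) V = idT R I₃
  diag : FDiagNonneg S

/-- σ_min: the smallest Fourier-domain diagonal entry of Σ. -/
noncomputable def sigmaMin (S : Tensor R R I₃) : ℝ :=
  ⨅ k : Fin I₃, ⨅ i : Fin R, (fSlice S k i i).re

/-- σ_max (= σ₁): the largest Fourier-domain diagonal entry of Σ. -/
noncomputable def sigmaMax (S : Tensor R R I₃) : ℝ :=
  ⨆ k : Fin I₃, ⨆ i : Fin R, (fSlice S k i i).re

/-- Condition number κ = σ_max / σ_min. -/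
noncomputable def condNum (S : Tensor R R I₃) : ℝ := sigmaMax S / sigmaMin S

/-- Σ^{1/2}: entrywise square roots in the Fourier domain. -/
noncomputable def sqrtT (S : Tensor R R I₃) : Tensor R R I₃ :=
  invDft fun i j k => (Real.sqrt ((dft S i j k).re) : ℂ)

/-- Σ^{-1/2}: entrywise reciprocal square roots in the Fourier domain. -/
noncomputable def invSqrtT (S : Tensor R R I₃) : Tensor R R I₃ :=
  invDft fun i j k => (((Real.sqrt ((dft S i j k).re))⁻¹ : ℝ) : ℂ)

/-- `Qi` is a two-sided t-product inverse of `Q` (i.e. `Q ∈ GL(R)`). -/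
def TInv (Q Qi : Tensor R R I₃) : Prop :=
  tprod Q Qi = idT R I₃ ∧ tprod Qi Q = idT R I₃

/-- Alignment error (the quantity inside the infimum defining `distT`)
for a given invertible Q with inverse Qi. -/
noncomputable def alignErr (L Ls : Tensor I₁ R I₃) (Rt Rs : Tensor I₂ R I₃)
    (Sh : Tensor R R I₃) (Q Qi : Tensor R R I₃) : ℝ :=
  Real.sqrt ((froNorm (tprod (tprod L Q - Ls) Sh)) ^ 2 +
    (froNorm (tprod (tprod Rt (tT Qi) - Rs) Sh)) ^ 2)

/-- The distance metric dist(L,R;L⋆,R⋆): the infimum of alignment errors over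
invertible tensors Q, where `Sh` is Σ⋆^{1/2}. -/
noncomputable def distT (L Ls : Tensor I₁ R I₃) (Rt Rs : Tensor I₂ R I₃)
    (Sh : Tensor R R I₃) : ℝ :=
  sInf {d : ℝ | ∃ Q Qi : Tensor R R I₃, TInv Q Qi ∧ d = alignErr L Ls Rt Rs Sh Q Qi}

/-- Q (with inverse Qi) is an optimal alignment tensor: it attains the infimum
defining the distance metric. -/
def IsOptAlign (L Ls : Tensor I₁ R I₃) (Rt Rs : Tensor I₂ R I₃)
    (Sh : Tensor R R I₃) (Q Qi : Tensor R R I₃) : Prop :=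
  TInv Q Qi ∧ alignErr L Ls Rt Rs Sh Q Qi = distT L Ls Rt Rs Sh

/-- Entrywise soft-thresholding. -/
noncomputable def softThresh (ζ : ℝ) (A : Tensor I₁ I₂ I₃) : Tensor I₁ I₂ I₃ :=
  fun i j k => Real.sign (A i j k) * max 0 (|A i j k| - ζ)

/-- Support: the set of index triples at which the tensor is nonzero. -/
def supp (A : Tensor I₁ I₂ I₃) : Set (Fin I₁ × Fin I₂ × Fin I₃) :=
  {p | A p.1 p.2.1 p.2.2 ≠ 0}

/-- α-sparsity: every horizontal, lateral and frontal slice has at most an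
α fraction of nonzero entries. -/
def IsSparse (α : ℝ) (S : Tensor I₁ I₂ I₃) : Prop :=
  (∀ i₁ : Fin I₁, ({p : Fin I₂ × Fin I₃ | S i₁ p.1 p.2 ≠ 0}.ncard : ℝ) ≤ α * I₂ * I₃) ∧
  (∀ i₂ : Fin I₂, ({p : Fin I₁ × Fin I₃ | S p.1 i₂ p.2 ≠ 0}.ncard : ℝ) ≤ α * I₁ * I₃) ∧
  (∀ i₃ : Fin I₃, ({p : Fin I₁ × Fin I₂ | S p.1 p.2 i₃ ≠ 0}.ncard : ℝ) ≤ α * I₁ * I₂)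

/-- Tensor μ-incoherence conditions for the skinny t-SVD factors U, V. -/
def Incoherent (μ : ℝ) (U : Tensor I₁ R I₃) (V : Tensor I₂ R I₃) : Prop :=
  twoInfNorm U ≤ Real.sqrt (μ * R / I₁) ∧ twoInfNorm V ≤ Real.sqrt (μ * R / I₂)

/-- Top-R truncated t-SVD of A: a skinny t-SVD-shaped factorization which, in
every Fourier-domain frontal slice, keeps R largest singular values together
with their singular vectors (the residual is orthogonal to the kept singular
vectors and its spectral norm is at most every kept singular value). -/
structure IsTruncTSVD (A : Tensor I₁ I₂ I₃) (U : Tensor I₁ R I₃)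
    (S : Tensor R R I₃) (V : Tensor I₂ R I₃) : Prop where
  orthU : tprod (tT U) U = idT R I₃
  orthV : tprod (tT V) V = idT R I₃
  diag : FDiagNonneg S
  leftOrth : ∀ k, (fSlice U k)ᴴ * (fSlice A k - fSlice (tprod (tprod U S) (tT V)) k) = 0
  rightOrth : ∀ k, (fSlice A k - fSlice (tprod (tprod U S) (tT V)) k) * fSlice V k = 0
  topR : ∀ k, ∀ r : Fin R,
    matSpecNorm (fSlice A k - fSlice (tprod (tprod U S) (tT V)) k) ≤ (fSlice S k r r).re

end RTPCA

open RTPCA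

/-!
Everything happens slice by slice in the Fourier domain, where the t-product is the matrix
product, the transpose is the conjugate transpose and `Σ⋆^{±1/2}` are positive diagonal matrices
`P^{±1}`. In one slice put `B = L̂♮ P⁻¹`: the hypothesis says `‖B - Û⋆‖ ≤ ε < 1` with `Û⋆` an
isometry, so `‖B x‖ ≥ (1 - ε) ‖x‖`. Hence `BᴴB` is invertible, and for `z = (BᴴB)⁻¹ y`,
`‖B z‖² = ⟪z, y⟫ ≤ ‖z‖ ‖y‖ ≤ ‖B z‖ ‖y‖ / (1 - ε)`; this bounds
`L̂♮ (L̂♮ᴴ L̂♮)⁻¹ P = B (BᴴB)⁻¹` by `1 / (1 - ε)`. The slice-wise inverses of the Gram matrices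
are conjugate-symmetric in the frequency, so they are the slices of a real tensor.
-/

namespace ZMod

open ComplexConjugate

variable {N : ℕ} [NeZero N]

open Fin.CommRing in
lemma finEquiv_apply (t : Fin N) : finEquiv N t = (t.val : ZMod N) := by
  rw [← map_natCast (finEquiv N), Fin.cast_val_eq_self]

lemma conj_dft (Φ : ZMod N → ℂ) (k : ZMod N) :
    conj (𝓕 Φ k) = 𝓕 (fun j ↦ conj (Φ j)) (-k) := by
  simp only [dft_apply, map_sum, smul_eq_mul, map_mul, ← AddChar.map_neg_eq_conj, mul_neg,
    neg_neg]

lemma dft_neg_of_real (Φ : ZMod N → ℂ) (hΦ : ∀ j, conj (Φ j) = Φ j) (k : ZMod N) :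
    𝓕 Φ (-k) = conj (𝓕 Φ k) := by
  simp only [conj_dft, hΦ]

lemma conj_invDFT_of_hermitian (Ψ : ZMod N → ℂ) (hΨ : ∀ j, Ψ (-j) = conj (Ψ j)) (x : ZMod N) :
    conj (𝓕⁻ Ψ x) = 𝓕⁻ Ψ x := by
  simp only [invDFT_apply', smul_eq_mul, map_mul, map_inv₀, map_natCast, conj_dft, neg_neg,
    ← hΨ]
  rw [dft_comp_neg]

lemma dft_conv (Φ Ψ : ZMod N → ℂ) (k : ZMod N) :
    𝓕 (fun x ↦ ∑ y, Φ y * Ψ (x - y)) k = 𝓕 Φ k * 𝓕 Ψ k := by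
  simp only [dft_apply, smul_eq_mul, Finset.mul_sum, Finset.sum_mul]
  conv_lhs => rw [Finset.sum_comm]
  conv_rhs => rw [Finset.sum_comm]
  refine Finset.sum_congr rfl fun y _ ↦ ?_
  refine (Fintype.sum_equiv (Equiv.addLeft y) _ _ fun z ↦ ?_).symm
  simp only [Equiv.coe_addLeft, add_sub_cancel_left, add_mul, neg_add, AddChar.map_add_eq_mul]
  ring

end ZMod

namespace RTPCA

open ZMod ComplexConjugate

variable {I₁ I₂ I₃ J R : ℕ}

/-- The tube `A(i, j, ·)` reindexed by `ZMod I₃`, so that `dft` becomes Mathlib's `ZMod.dft`. -/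
def tube [NeZero I₃] (A : Tensor I₁ I₂ I₃) (i : Fin I₁) (j : Fin I₂) : ZMod I₃ → ℂ :=
  fun s ↦ A i j ((finEquiv I₃).symm s)

lemma stdAddChar_finEquiv_mul [NeZero I₃] (m t : Fin I₃) :
    stdAddChar (finEquiv I₃ m * finEquiv I₃ t) =
      Complex.exp (2 * Real.pi * Complex.I * (m.val : ℂ) * (t.val : ℂ) / (I₃ : ℂ)) := by
  have h : finEquiv I₃ m * finEquiv I₃ t = ((m.val * t.val : ℤ) : ZMod I₃) := by
    simp [finEquiv_apply]
  rw [h, stdAddChar_coe]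
  push_cast
  ring_nf

lemma fSlice_apply_eq_dft_tube [NeZero I₃] (A : Tensor I₁ I₂ I₃) (k : Fin I₃) (i : Fin I₁)
    (j : Fin I₂) : fSlice A k i j = 𝓕 (tube A i j) (finEquiv I₃ k) := by
  rw [fSlice, Matrix.of_apply, RTPCA.dft, dft_apply, ← (finEquiv I₃).toEquiv.sum_comp]
  refine Finset.sum_congr rfl fun t _ ↦ ?_
  simp only [RingEquiv.toEquiv_eq_coe, EquivLike.coe_coe, tube, RingEquiv.symm_apply_apply,
    smul_eq_mul, AddChar.map_neg_eq_inv, stdAddChar_finEquiv_mul, ← Complex.exp_neg, neg_div]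
  rw [mul_comm]
  ring_nf

lemma invDft_eq_re_invDFT [NeZero I₃] (F : Fin I₁ → Fin I₂ → Fin I₃ → ℂ) (i : Fin I₁) (j : Fin I₂)
    (t : Fin I₃) :
    invDft F i j t = (𝓕⁻ (fun s ↦ F i j ((finEquiv I₃).symm s)) (finEquiv I₃ t)).re := by
  rw [invDFT_apply, ← (finEquiv I₃).toEquiv.sum_comp, invDft, div_eq_inv_mul]
  congr 3
  funext m
  simp only [RingEquiv.toEquiv_eq_coe, EquivLike.coe_coe, RingEquiv.symm_apply_apply,
    smul_eq_mul, stdAddChar_finEquiv_mul]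
  rw [mul_comm]

lemma fSlice_sub (A B : Tensor I₁ I₂ I₃) (k : Fin I₃) :
    fSlice (A - B) k = fSlice A k - fSlice B k := by
  have := NeZero.of_pos k.pos
  ext i j
  have h : tube (A - B) i j = tube A i j - tube B i j := funext fun s ↦ by simp [tube]
  simp only [fSlice_apply_eq_dft_tube, h, map_sub, Matrix.sub_apply, Pi.sub_apply]

lemma fSlice_tprod (A : Tensor I₁ I₂ I₃) (B : Tensor I₂ J I₃) (k : Fin I₃) :
    fSlice (tprod A B) k = fSlice A k * fSlice B k := by
  have := NeZero.of_pos k.pos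
  ext i j
  have h : tube (tprod A B) i j = ∑ l, fun x ↦ ∑ y, tube A i l y * tube B l j (x - y) := by
    funext x
    simp only [tube, tprod, Complex.ofReal_sum, Complex.ofReal_mul, Finset.sum_apply]
    refine Finset.sum_congr rfl fun l _ ↦ ?_
    rw [← (finEquiv I₃).symm.toEquiv.sum_comp]
    simp [map_sub]
  simp only [fSlice_apply_eq_dft_tube, h, map_sum, Finset.sum_apply, dft_conv, Matrix.mul_apply]

lemma dft_neg (A : Tensor I₁ I₂ I₃) (i : Fin I₁) (j : Fin I₂) (k : Fin I₃) :
    dft A i j (-k) = conj (dft A i j k) := by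
  have := NeZero.of_pos k.pos
  change fSlice A (-k) i j = conj (fSlice A k i j)
  rw [fSlice_apply_eq_dft_tube, fSlice_apply_eq_dft_tube, map_neg]
  exact dft_neg_of_real _ (fun s ↦ Complex.conj_ofReal _) _

lemma fSlice_neg (A : Tensor I₁ I₂ I₃) (k : Fin I₃) :
    fSlice A (-k) = (fSlice A k).map conj := by
  ext i j
  exact dft_neg A i j k

lemma fSlice_tT (A : Tensor I₁ I₂ I₃) (k : Fin I₃) :
    fSlice (tT A) k = (fSlice A k)ᴴ := by
  have := NeZero.of_pos k.pos
  ext j i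
  have h : tube (tT A) j i = fun s ↦ tube A i j (-s) := funext fun s ↦ by simp [tube, tT]
  calc fSlice (tT A) k j i = 𝓕 (fun s ↦ tube A i j (-s)) (finEquiv I₃ k) := by
        rw [fSlice_apply_eq_dft_tube, h]
    _ = fSlice A (-k) i j := by rw [dft_comp_neg, fSlice_apply_eq_dft_tube, map_neg]
    _ = star (fSlice A k i j) := by rw [fSlice_neg]; rfl

lemma fSlice_idT (k : Fin I₃) : fSlice (idT R I₃) k = 1 := by
  have := NeZero.of_pos k.pos
  ext i j
  by_cases hij : i = j <;>
    simp [fSlice_apply_eq_dft_tube, tube, idT, dft_apply, Matrix.one_apply, hij,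
      apply_ite ((↑) : ℝ → ℂ)]

lemma ext_fSlice {A B : Tensor I₁ I₂ I₃} (h : ∀ k, fSlice A k = fSlice B k) : A = B := by
  rcases Nat.eq_zero_or_pos I₃ with rfl | hI
  · funext i j t
    exact t.elim0
  have := NeZero.of_pos hI
  funext i j t
  have htube : tube A i j = tube B i j := ZMod.dft.injective <| funext fun s ↦ by
    simpa [fSlice_apply_eq_dft_tube] using congr_fun (congr_fun (h ((finEquiv I₃).symm s)) i) j
  simpa [tube] using congr_fun htube (finEquiv I₃ t)

lemma fSlice_invDft (F : Fin I₁ → Fin I₂ → Fin I₃ → ℂ)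
    (hF : ∀ i j k, F i j (-k) = conj (F i j k)) (k : Fin I₃) :
    fSlice (invDft F) k = Matrix.of fun i j ↦ F i j k := by
  have := NeZero.of_pos k.pos
  ext i j
  set Ψ : ZMod I₃ → ℂ := fun s ↦ F i j ((finEquiv I₃).symm s)
  have hΨ : ∀ s, Ψ (-s) = conj (Ψ s) := fun s ↦ by simp [Ψ, map_neg, hF]
  have htube : tube (invDft F) i j = 𝓕⁻ Ψ := funext fun s ↦ by
    simp only [tube, invDft_eq_re_invDFT, RingEquiv.apply_symm_apply]
    exact Complex.conj_eq_iff_re.mp (conj_invDFT_of_hermitian Ψ hΨ s)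
  simp [fSlice_apply_eq_dft_tube, htube, Ψ]

lemma exists_tInv_of_isUnit_fSlice (G : Tensor R R I₃) (hG : ∀ k, IsUnit (fSlice G k)) :
    ∃ Gi, TInv G Gi ∧ ∀ k, fSlice Gi k = (fSlice G k)⁻¹ := by
  have hdet k : IsUnit (fSlice G k).det := (Matrix.isUnit_iff_isUnit_det _).mp (hG k)
  have hconj k : (fSlice G (-k))⁻¹ = (fSlice G k)⁻¹.map conj := by
    rw [fSlice_neg]
    refine Matrix.inv_eq_right_inv ?_
    rw [← Matrix.map_mul, Matrix.mul_nonsing_inv _ (hdet k),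
      Matrix.map_one _ (map_zero _) (map_one _)]
  have hslice k : fSlice (invDft fun i j k ↦ (fSlice G k)⁻¹ i j) k = (fSlice G k)⁻¹ := by
    rw [fSlice_invDft _ fun i j k ↦ by rw [hconj]; rfl]
    rfl
  refine ⟨_, ⟨ext_fSlice fun k ↦ ?_, ext_fSlice fun k ↦ ?_⟩, hslice⟩
  · rw [fSlice_tprod, hslice, Matrix.mul_nonsing_inv _ (hdet k), fSlice_idT]
  · rw [fSlice_tprod, hslice, Matrix.nonsing_inv_mul _ (hdet k), fSlice_idT]

section SpectralNorm

open Matrix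

variable {m n : ℕ}

lemma norm_toEuclideanLin_le (M : Matrix (Fin m) (Fin n) ℂ) (x : EuclideanSpace ℂ (Fin n)) :
    ‖toEuclideanLin M x‖ ≤ matSpecNorm M * ‖x‖ :=
  (toEuclideanLin M).toContinuousLinearMap.le_opNorm x

lemma inner_toEuclideanLin_toEuclideanLin (B : Matrix (Fin m) (Fin n) ℂ)
    (x y : EuclideanSpace ℂ (Fin n)) :
    inner ℂ (toEuclideanLin B x) (toEuclideanLin B y) = inner ℂ x (toEuclideanLin (Bᴴ * B) y) := by
  rw [toLpLin_mul_same, LinearMap.comp_apply, toEuclideanLin_conjTranspose_eq_adjoint,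
    LinearMap.adjoint_inner_right]

lemma norm_toEuclideanLin_of_conjTranspose_mul_self {U : Matrix (Fin m) (Fin n) ℂ}
    (hU : Uᴴ * U = 1) (x : EuclideanSpace ℂ (Fin n)) : ‖toEuclideanLin U x‖ = ‖x‖ := by
  have h := congrArg RCLike.re (inner_toEuclideanLin_toEuclideanLin U x x)
  rw [hU, toLpLin_one, LinearMap.id_apply, inner_self_eq_norm_sq, inner_self_eq_norm_sq] at h
  exact (sq_eq_sq₀ (norm_nonneg _) (norm_nonneg _)).mp h

lemma mul_norm_le_norm_toEuclideanLin {U B : Matrix (Fin m) (Fin n) ℂ} (hU : Uᴴ * U = 1)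
    {ε : ℝ} (hB : matSpecNorm (B - U) ≤ ε) (x : EuclideanSpace ℂ (Fin n)) :
    (1 - ε) * ‖x‖ ≤ ‖toEuclideanLin B x‖ := by
  have hdiff : ‖toEuclideanLin U x‖ - ‖toEuclideanLin B x‖ ≤ ‖toEuclideanLin (B - U) x‖ := by
    rw [map_sub, LinearMap.sub_apply, norm_sub_rev]
    exact norm_sub_norm_le _ _
  have hεx := mul_le_mul_of_nonneg_right hB (norm_nonneg x)
  rw [norm_toEuclideanLin_of_conjTranspose_mul_self hU] at hdiff
  linarith [norm_toEuclideanLin_le (B - U) x]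

variable {B : Matrix (Fin m) (Fin n) ℂ} {c : ℝ}

open scoped ComplexOrder in
lemma isUnit_conjTranspose_mul_self_of_le_norm (hc : 0 < c)
    (hB : ∀ x, c * ‖x‖ ≤ ‖toEuclideanLin B x‖) : IsUnit (Bᴴ * B) := by
  have hinj : Function.Injective (toEuclideanLin B) := by
    refine (injective_iff_map_eq_zero _).mpr fun x hx ↦ norm_le_zero_iff.mp ?_
    have := hB x
    rw [hx, norm_zero] at this
    exact nonpos_of_mul_nonpos_right this hc
  refine (PosDef.conjTranspose_mul_self B fun x y hxy ↦ ?_).isUnit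
  apply WithLp.toLp_injective 2
  apply hinj
  simp [toLpLin_apply, hxy]

lemma matSpecNorm_mul_inv_conjTranspose_mul_self_le (hc : 0 < c)
    (hB : ∀ x, c * ‖x‖ ≤ ‖toEuclideanLin B x‖) : matSpecNorm (B * (Bᴴ * B)⁻¹) ≤ 1 / c := by
  have hdet := (isUnit_iff_isUnit_det _).mp (isUnit_conjTranspose_mul_self_of_le_norm hc hB)
  refine ContinuousLinearMap.opNorm_le_bound _ (by positivity) fun y ↦ ?_
  set z := toEuclideanLin (Bᴴ * B)⁻¹ y
  have hz : toEuclideanLin (Bᴴ * B) z = y := by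
    rw [← LinearMap.comp_apply, ← toLpLin_mul_same, mul_nonsing_inv _ hdet, toLpLin_one,
      LinearMap.id_apply]
  have hsq : ‖toEuclideanLin B z‖ ^ 2 ≤ ‖z‖ * ‖y‖ := by
    rw [← inner_self_eq_norm_sq (𝕜 := ℂ), inner_toEuclideanLin_toEuclideanLin, hz]
    exact (RCLike.re_le_norm _).trans (norm_inner_le_norm _ _)
  have hcz := hB z
  show ‖toEuclideanLin (B * (Bᴴ * B)⁻¹) y‖ ≤ 1 / c * ‖y‖
  rw [toLpLin_mul_same, LinearMap.comp_apply, one_div_mul_eq_div, le_div_iff₀ hc]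
  change ‖toEuclideanLin B z‖ * c ≤ ‖y‖
  rcases (norm_nonneg (toEuclideanLin B z)).eq_or_lt with h0 | hpos
  · rw [← h0, zero_mul]
    exact norm_nonneg y
  refine le_of_mul_le_mul_left ?_ hpos
  nlinarith [mul_le_mul_of_nonneg_right hsq hc.le,
    mul_le_mul_of_nonneg_right hcz (norm_nonneg y)]

theorem isUnit_gram_and_matSpecNorm_le {U M : Matrix (Fin m) (Fin n) ℂ}
    {P : Matrix (Fin n) (Fin n) ℂ} (hU : Uᴴ * U = 1) (hP : IsUnit P) (hPh : P.IsHermitian)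
    {ε : ℝ} (hε : ε < 1) (hM : matSpecNorm ((M - U * P) * P⁻¹) ≤ ε) :
    IsUnit (Mᴴ * M) ∧ matSpecNorm (M * (Mᴴ * M)⁻¹ * P) ≤ 1 / (1 - ε) := by
  have hdet := (isUnit_iff_isUnit_det P).mp hP
  set B := M * P⁻¹
  have hMB : M = B * P := (nonsing_inv_mul_cancel_right P M hdet).symm
  have hBU : B - U = (M - U * P) * P⁻¹ := by
    rw [Matrix.sub_mul, mul_nonsing_inv_cancel_right P U hdet]
  have hB : ∀ x, (1 - ε) * ‖x‖ ≤ ‖toEuclideanLin B x‖ :=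
    mul_norm_le_norm_toEuclideanLin hU (hBU ▸ hM)
  have hgram : Mᴴ * M = P * (Bᴴ * B) * P := by
    rw [hMB, conjTranspose_mul, hPh.eq]
    simp only [Matrix.mul_assoc]
  refine ⟨hgram ▸ (hP.mul (isUnit_conjTranspose_mul_self_of_le_norm (sub_pos.2 hε) hB)).mul hP,
    ?_⟩
  have hcancel : M * (Mᴴ * M)⁻¹ * P = B * (Bᴴ * B)⁻¹ := by
    rw [hgram, Matrix.mul_inv_rev, Matrix.mul_inv_rev, hMB]
    simp only [Matrix.mul_assoc, mul_nonsing_inv_cancel_left P _ hdet,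
      nonsing_inv_mul _ hdet, Matrix.mul_one]
  rw [hcancel]
  exact matSpecNorm_mul_inv_conjTranspose_mul_self_le (sub_pos.2 hε) hB

end SpectralNorm

open Matrix

lemma matSpecNorm_fSlice_le_specNorm (A : Tensor I₁ I₂ I₃) (k : Fin I₃) :
    matSpecNorm (fSlice A k) ≤ specNorm A :=
  le_ciSup (f := fun k ↦ matSpecNorm (fSlice A k)) (Set.finite_range _).bddAbove k

lemma specNorm_le {A : Tensor I₁ I₂ I₃} {c : ℝ} (hc : 0 ≤ c)
    (hA : ∀ k, matSpecNorm (fSlice A k) ≤ c) : specNorm A ≤ c :=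
  Real.iSup_le hA hc

lemma fSlice_invDft_ofReal_comp_re (f : ℝ → ℝ) (A : Tensor I₁ I₂ I₃) (k : Fin I₃) :
    fSlice (invDft fun i j k ↦ (f (dft A i j k).re : ℂ)) k =
      Matrix.of fun i j ↦ (f (fSlice A k i j).re : ℂ) :=
  fSlice_invDft _ (fun i j k ↦ by rw [dft_neg, Complex.conj_re, Complex.conj_ofReal]) k

lemma FDiagPos.fSlice_invDft_eq_diagonal {S : Tensor R R I₃} (hS : FDiagPos S) {f : ℝ → ℝ}
    (hf : f 0 = 0) (k : Fin I₃) :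
    fSlice (invDft fun i j k ↦ (f (dft S i j k).re : ℂ)) k =
      diagonal fun i ↦ (f (fSlice S k i i).re : ℂ) := by
  rw [fSlice_invDft_ofReal_comp_re]
  ext i j
  rcases eq_or_ne i j with rfl | hij
  · simp
  · simp [hS.1 k i j hij, hij, hf]

lemma FDiagPos.fSlice_sqrtT_mul_fSlice_invSqrtT {S : Tensor R R I₃} (hS : FDiagPos S)
    (k : Fin I₃) : fSlice (sqrtT S) k * fSlice (invSqrtT S) k = 1 := by
  rw [sqrtT, invSqrtT, hS.fSlice_invDft_eq_diagonal Real.sqrt_zero,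
    hS.fSlice_invDft_eq_diagonal (f := fun x ↦ (√x)⁻¹) (by simp), diagonal_mul_diagonal,
    ← diagonal_one]
  congr 1
  funext i
  rw [← Complex.ofReal_mul, mul_inv_cancel₀ (Real.sqrt_pos.2 (hS.2 k i).1).ne', Complex.ofReal_one]

lemma FDiagPos.isHermitian_fSlice_sqrtT {S : Tensor R R I₃} (hS : FDiagPos S) (k : Fin I₃) :
    (fSlice (sqrtT S) k).IsHermitian := by
  rw [sqrtT, hS.fSlice_invDft_eq_diagonal Real.sqrt_zero]
  exact isHermitian_diagonal_of_self_adjoint _ (funext fun i ↦ Complex.conj_ofReal _)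

theorem exists_tInv_gram_and_specNorm_le {U : Tensor I₁ R I₃} {S : Tensor R R I₃}
    (hU : tprod (tT U) U = idT R I₃) (hS : FDiagPos S) (L : Tensor I₁ R I₃)
    (hL : specNorm (tprod (L - tprod U (sqrtT S)) (invSqrtT S)) < 1) :
    ∃ G : Tensor R R I₃, TInv (tprod (tT L) L) G ∧
      specNorm (tprod (tprod L G) (sqrtT S))
        ≤ 1 / (1 - specNorm (tprod (L - tprod U (sqrtT S)) (invSqrtT S))) := by
  set ε := specNorm (tprod (L - tprod U (sqrtT S)) (invSqrtT S))
  have hslice k : IsUnit (fSlice (tprod (tT L) L) k) ∧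
      matSpecNorm (fSlice L k * (fSlice (tprod (tT L) L) k)⁻¹ * fSlice (sqrtT S) k)
        ≤ 1 / (1 - ε) := by
    have hPQ := hS.fSlice_sqrtT_mul_fSlice_invSqrtT k
    have hUk : (fSlice U k)ᴴ * fSlice U k = 1 := by
      simpa [fSlice_tprod, fSlice_tT, fSlice_idT] using congrArg (fSlice · k) hU
    rw [fSlice_tprod, fSlice_tT]
    have hP := (isUnit_iff_isUnit_det _).mpr (isUnit_det_of_right_inverse hPQ)
    refine isUnit_gram_and_matSpecNorm_le hUk hP (hS.isHermitian_fSlice_sqrtT k) hL ?_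
    rw [inv_eq_right_inv hPQ, ← fSlice_tprod, ← fSlice_sub, ← fSlice_tprod]
    exact matSpecNorm_fSlice_le_specNorm _ k
  obtain ⟨G, hG, hGinv⟩ := exists_tInv_of_isUnit_fSlice _ fun k ↦ (hslice k).1
  refine ⟨G, hG, specNorm_le (by linarith [one_div_pos.2 (sub_pos.2 hL)]) fun k ↦ ?_⟩
  rw [fSlice_tprod, fSlice_tprod, hGinv]
  exact (hslice k).2

end RTPCA

/-- Weyl-type lemma: invertibility of the Gram tensors and
operator-norm bounds. -/
theorem gram_invertible_and_opNorm_bound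
    {I₁ I₂ I₃ R : ℕ}
    (Xs : Tensor I₁ I₂ I₃) (Us : Tensor I₁ R I₃) (Sig : Tensor R R I₃) (Vs : Tensor I₂ R I₃)
    (hsvd : IsSkinnyTSVD Xs Us Sig Vs)
    (Lnat : Tensor I₁ R I₃) (Rnat : Tensor I₂ R I₃)
    (h : max (specNorm (tprod (Lnat - tprod Us (sqrtT Sig)) (invSqrtT Sig)))
             (specNorm (tprod (Rnat - tprod Vs (sqrtT Sig)) (invSqrtT Sig))) < 1) :
    (∃ Gl : Tensor R R I₃, TInv (tprod (tT Lnat) Lnat) Gl ∧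
      specNorm (tprod (tprod Lnat Gl) (sqrtT Sig))
        ≤ 1 / (1 - specNorm (tprod (Lnat - tprod Us (sqrtT Sig)) (invSqrtT Sig)))) ∧
    (∃ Gr : Tensor R R I₃, TInv (tprod (tT Rnat) Rnat) Gr ∧
      specNorm (tprod (tprod Rnat Gr) (sqrtT Sig))
        ≤ 1 / (1 - specNorm (tprod (Rnat - tprod Vs (sqrtT Sig)) (invSqrtT Sig)))) := by
  obtain ⟨hL, hR⟩ := max_lt_iff.mp h
  exact ⟨exists_tInv_gram_and_specNorm_le hsvd.orthU hsvd.diag Lnat hL,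
    exists_tInv_gram_and_specNorm_le hsvd.orthV hsvd.diag Rnat hR⟩
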